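/- arXiv:2106.06142 — 5 statements merged into one kernel-verified Lean document; each statement's English description precedes it below -/
import Mathlib

section
/- For a nonnegative bounded measurable loss ℓ and probability distribution P, CVaR_α(P) := inf over η ∈ ℝ of { α^{-1} E_P[(ℓ(Z) - η)_+] + η } is attained, and the infimum is achieved at the α-quantile q(α) = inf{ q : P(ℓ(Z) > q) ≤ α }. -/
/-! The α-quantile `q` satisfies `P(ℓ > q) ≤ α ≤ P(ℓ ≥ q)`: the first inequality by continuity
of `P` from below along `{ℓ > r}` as `r ↓ q`, the second by continuity from above as `r ↑ q`.
These are the one-sided optimality conditions for the convex function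
`g(η) = α⁻¹ E(ℓ - η)_+ + η`. For `η ≥ q`, `(ℓ - q)_+ ≤ (ℓ - η)_+ + (η - q) 1{ℓ > q}`, hence
`g(q) ≤ g(η) + (η - q)(α⁻¹ P(ℓ > q) - 1) ≤ g(η)`; for `η ≤ q`,
`(ℓ - q)_+ + (q - η) 1{ℓ ≥ q} ≤ (ℓ - η)_+`, hence `g(q) ≤ g(η) - (q - η)(α⁻¹ P(ℓ ≥ q) - 1) ≤ g(η)`.
-/

open MeasureTheory Set
open scoped ENNReal

noncomputable def upperQuantile {Ω : Type*} [MeasurableSpace Ω] (μ : Measure Ω) (f : Ω → ℝ)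
    (c : ℝ≥0∞) : ℝ :=
  sInf {r : ℝ | μ {x | f x > r} ≤ c}

section Quantile

variable {Ω : Type*} [MeasurableSpace Ω] {μ : Measure Ω} {f : Ω → ℝ} {c : ℝ≥0∞}

theorem measure_gt_upperQuantile_le (hne : {r : ℝ | μ {x | f x > r} ≤ c}.Nonempty) :
    μ {x | f x > upperQuantile μ f c} ≤ c := by
  obtain ⟨u, hu_anti, hu_gt, hu_lim⟩ := exists_seq_strictAnti_tendsto (upperQuantile μ f c)
  have hunion : {x | f x > upperQuantile μ f c} = ⋃ n, {x | f x > u n} := by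
    ext x
    simp only [mem_ofPred_eq, mem_iUnion]
    refine ⟨fun hx => (hu_lim.eventually (gt_mem_nhds hx)).exists, ?_⟩
    rintro ⟨n, hn⟩
    exact (hu_gt n).trans hn
  have hmono : Monotone fun n => {x | f x > u n} :=
    fun m n hmn x hx => (hu_anti.antitone hmn).trans_lt hx
  rw [hunion, hmono.measure_iUnion]
  refine iSup_le fun n => ?_
  obtain ⟨r, hr, hrn⟩ := exists_lt_of_csInf_lt hne (hu_gt n)
  exact (measure_mono fun x hx => hrn.trans hx).trans hr

theorem le_measure_ge_upperQuantile [IsFiniteMeasure μ] (hf : Measurable f)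
    (hbdd : BddBelow {r : ℝ | μ {x | f x > r} ≤ c}) :
    c ≤ μ {x | f x ≥ upperQuantile μ f c} := by
  obtain ⟨u, hu_mono, hu_lt, hu_lim⟩ := exists_seq_strictMono_tendsto (upperQuantile μ f c)
  have hinter : {x | f x ≥ upperQuantile μ f c} = ⋂ n, {x | f x > u n} := by
    ext x
    simp only [mem_ofPred_eq, mem_iInter]
    refine ⟨fun hx n => (hu_lt n).trans_le hx, fun hx => ?_⟩
    exact le_of_tendsto' hu_lim fun n => (hx n).le
  have hanti : Antitone fun n => {x | f x > u n} :=
    fun m n hmn x hx => (hu_mono.monotone hmn).trans_lt hx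
  rw [hinter, hanti.measure_iInter
    (fun n => (measurableSet_lt measurable_const hf).nullMeasurableSet) ⟨0, measure_ne_top μ _⟩]
  refine le_iInf fun n => (not_le.mp ?_).le
  exact notMem_of_lt_csInf (s := {r : ℝ | μ {x | f x > r} ≤ c}) (hu_lt n) hbdd

end Quantile

noncomputable def cvarObjective {Ω : Type*} [MeasurableSpace Ω] (μ : Measure Ω) (f : Ω → ℝ)
    (α η : ℝ) : ℝ :=
  α⁻¹ * (∫ x, max (f x - η) 0 ∂μ) + η

section CVaR

variable {Ω : Type*} [MeasurableSpace Ω] {μ : Measure Ω} [IsFiniteMeasure μ] {f : Ω → ℝ} {C : ℝ}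

theorem integrable_max_sub_const (hf : Measurable f) (hC : ∀ x, f x ≤ C) (η : ℝ) :
    Integrable (fun x => max (f x - η) 0) μ := by
  refine .of_bound ((hf.sub_const η).max measurable_const).aestronglyMeasurable (max (C - η) 0)
    (ae_of_all _ fun x => ?_)
  rw [Real.norm_of_nonneg (le_max_right _ _)]
  exact max_le_max_right 0 (by linarith [hC x])

theorem integral_max_sub_le_add_measureReal_gt (hf : Measurable f) (hC : ∀ x, f x ≤ C)
    {q η : ℝ} (hqη : q ≤ η) :
    ∫ x, max (f x - q) 0 ∂μ ≤ ∫ x, max (f x - η) 0 ∂μ + μ.real {x | f x > q} * (η - q) := by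
  have hs : MeasurableSet {x | f x > q} := measurableSet_lt measurable_const hf
  rw [← smul_eq_mul, ← integral_indicator_const _ hs,
    ← integral_add (integrable_max_sub_const hf hC η) ((integrable_const _).indicator hs)]
  refine integral_mono (integrable_max_sub_const hf hC q)
    ((integrable_max_sub_const hf hC η).add ((integrable_const _).indicator hs)) fun x => ?_
  by_cases hx : f x > q
  · simp only [indicator_of_mem (show x ∈ {x | f x > q} from hx)]
    exact max_le (by linarith [le_max_left (f x - η) 0]) (by linarith [le_max_right (f x - η) 0])
  · simp only [indicator_of_notMem (show x ∉ {x | f x > q} from hx)]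
    exact max_le (by linarith [le_max_right (f x - η) 0]) (by linarith [le_max_right (f x - η) 0])

theorem integral_max_sub_add_measureReal_ge_le (hf : Measurable f) (hC : ∀ x, f x ≤ C)
    {q η : ℝ} (hηq : η ≤ q) :
    ∫ x, max (f x - q) 0 ∂μ + μ.real {x | f x ≥ q} * (q - η) ≤ ∫ x, max (f x - η) 0 ∂μ := by
  have hs : MeasurableSet {x | f x ≥ q} := measurableSet_le measurable_const hf
  rw [← smul_eq_mul, ← integral_indicator_const _ hs,
    ← integral_add (integrable_max_sub_const hf hC q) ((integrable_const _).indicator hs)]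
  refine integral_mono ((integrable_max_sub_const hf hC q).add ((integrable_const _).indicator hs))
    (integrable_max_sub_const hf hC η) fun x => ?_
  by_cases hx : f x ≥ q
  · simp only [indicator_of_mem (show x ∈ {x | f x ≥ q} from hx)]
    rw [max_eq_left (by linarith : 0 ≤ f x - q), max_eq_left (by linarith : 0 ≤ f x - η)]
    linarith
  · simp only [indicator_of_notMem (show x ∉ {x | f x ≥ q} from hx)]
    rw [max_eq_right (by linarith : f x - q ≤ 0)]
    linarith [le_max_right (f x - η) 0]

theorem cvarObjective_quantile_le (hf : Measurable f) (hC : ∀ x, f x ≤ C) {α q : ℝ} (hα : 0 < α)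
    (hgt : μ.real {x | f x > q} ≤ α) (hge : α ≤ μ.real {x | f x ≥ q}) (η : ℝ) :
    cvarObjective μ f α q ≤ cvarObjective μ f α η := by
  have hscale : ∀ η, α * cvarObjective μ f α η = ∫ x, max (f x - η) 0 ∂μ + α * η := fun η => by
    rw [cvarObjective, mul_add, mul_inv_cancel_left₀ hα.ne']
  refine le_of_mul_le_mul_left ?_ hα
  rw [hscale, hscale]
  rcases le_total q η with hqη | hηq
  · linarith [integral_max_sub_le_add_measureReal_gt (μ := μ) hf hC hqη,
      mul_le_mul_of_nonneg_right hgt (sub_nonneg.mpr hqη)]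
  · linarith [integral_max_sub_add_measureReal_ge_le (μ := μ) hf hC hηq,
      mul_le_mul_of_nonneg_right hge (sub_nonneg.mpr hηq)]

end CVaR

/-- For a nonnegative bounded measurable loss `ℓ`, the CVaR dual infimum
`inf_η { α⁻¹ E_P[(ℓ - η)_+] + η }` is attained at the α-quantile
`q(α) = inf { q | P(ℓ > q) ≤ α }`. -/
theorem cvar_attained_at_quantile {Z : Type*} [MeasurableSpace Z]
    (P : Measure Z) [IsProbabilityMeasure P]
    (ℓ : Z → ℝ) (hmeas : Measurable ℓ) (hnonneg : ∀ z, 0 ≤ ℓ z)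
    (C : ℝ) (hbdd : ∀ z, ℓ z ≤ C)
    (α : ℝ) (hα : 0 < α) (hα1 : α < 1)
    (q : ℝ) (hq : q = sInf {r : ℝ | P {z | ℓ z > r} ≤ ENNReal.ofReal α}) :
    α⁻¹ * (∫ z, max (ℓ z - q) 0 ∂P) + q =
      ⨅ η : ℝ, α⁻¹ * (∫ z, max (ℓ z - η) 0 ∂P) + η := by
  change q = upperQuantile P ℓ (ENNReal.ofReal α) at hq
  have hC_mem : C ∈ {r : ℝ | P {z | ℓ z > r} ≤ ENNReal.ofReal α} := by
    simp [fun z => not_lt.mpr (hbdd z)]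
  have hbddBelow : BddBelow {r : ℝ | P {z | ℓ z > r} ≤ ENNReal.ofReal α} := by
    refine ⟨0, fun r hr => not_lt.mp fun hr0 => hα1.not_ge ?_⟩
    simpa [fun z => hr0.trans_le (hnonneg z)] using hr
  have hgt : P.real {z | ℓ z > q} ≤ α :=
    ENNReal.toReal_le_of_le_ofReal hα.le (hq ▸ measure_gt_upperQuantile_le ⟨C, hC_mem⟩)
  have hge : α ≤ P.real {z | ℓ z ≥ q} := (ENNReal.ofReal_le_iff_le_toReal (measure_ne_top _ _)).mp
    (hq ▸ le_measure_ge_upperQuantile hmeas hbddBelow)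
  have hmin := cvarObjective_quantile_le hmeas hbdd hα hgt hge
  exact (IsLeast.isGLB ⟨mem_range_self q, forall_mem_range.mpr hmin⟩).ciInf_eq.symm
end

section
/- Let ℓ be nonnegative with E_P[ℓ] = μ, Var_P[ℓ] = v, and suppose ρ ≤ v/(2μ²). Set η* = μ - √(v/(2ρ)). Then η* ≤ 0 and the dual objective evaluates to √(1+2ρ)·E_P[(ℓ-η*)_+²]^{1/2} + η* = μ + √(2ρ v). -/
open MeasureTheory ProbabilityTheory Real

/-! With `η* = μ - c`, `c = √(v/(2ρ))`, the condition `ρ ≤ v/(2μ²)` gives `μ ≤ c`, so `η* ≤ 0 ≤ ℓ`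
and the positive part is inactive. The bias–variance identity then gives
`E[(ℓ - η*)²] = v + c² = (1 + 2ρ) c²`, and the objective collapses to
`(1 + 2ρ) c + μ - c = μ + 2ρc = μ + √(2ρv)`. -/

theorem integral_sub_const_sq_eq_variance_add {Ω : Type*} [MeasurableSpace Ω] {P : Measure Ω}
    [IsProbabilityMeasure P] {X : Ω → ℝ} (hX : MemLp X 2 P) (a : ℝ) :
    ∫ ω, (X ω - a) ^ 2 ∂P = Var[X; P] + (P[X] - a) ^ 2 := by
  have hvar := variance_eq_sub (X := fun ω ↦ X ω - a) (hX.sub (memLp_const a))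
  have hmean : ∫ ω, (X ω - a) ∂P = P[X] - a := by
    rw [integral_sub (hX.integrable one_le_two) (integrable_const a), integral_const]
    simp
  rw [variance_sub_const hX.aestronglyMeasurable] at hvar
  simp only [Pi.pow_apply] at hvar
  rw [hvar, hmean]
  ring

theorem le_sqrt_div_of_le_div_sq {μ v ρ : ℝ} (hρ : 0 < ρ) (h : ρ ≤ v / (2 * μ ^ 2)) :
    μ ≤ √(v / (2 * ρ)) := by
  rcases le_or_gt μ 0 with hμ | hμ
  · exact hμ.trans (sqrt_nonneg _)
  rw [le_sqrt' hμ, le_div_iff₀ (by positivity)]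
  rw [le_div_iff₀ (by positivity)] at h
  linarith

theorem sqrt_one_add_mul_sqrt_add_sq {v ρ : ℝ} (hρ : 0 < ρ) (hv : 0 ≤ v) :
    √(1 + 2 * ρ) * √(v + √(v / (2 * ρ)) ^ 2) = √(v / (2 * ρ)) + √(2 * ρ * v) := by
  set c := √(v / (2 * ρ))
  have hc : c ^ 2 = v / (2 * ρ) := sq_sqrt (by positivity)
  have hsum : v + c ^ 2 = (1 + 2 * ρ) * c ^ 2 := by
    rw [hc]; field_simp; ring
  have hprod : 2 * ρ * v = (2 * ρ * c) ^ 2 := by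
    rw [mul_pow, hc]; field_simp
  rw [hsum, hprod, sqrt_mul (by positivity), sqrt_sq (by positivity), sqrt_sq (by positivity),
    ← mul_assoc, mul_self_sqrt (by positivity)]
  ring

theorem chisq_dual_at_optimal_eta_general {Z : Type*} [MeasurableSpace Z]
    (P : Measure Z) [IsProbabilityMeasure P]
    (ℓ : Z → ℝ) (hnonneg : ∀ z, 0 ≤ ℓ z)
    (hL2 : MemLp ℓ 2 P)
    (μ v : ℝ) (hμ : μ = ∫ z, ℓ z ∂P) (hv : v = ∫ z, (ℓ z - μ) ^ 2 ∂P)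
    (ρ : ℝ) (hρ : 0 < ρ) (hρv : ρ ≤ v / (2 * μ ^ 2))
    (ηs : ℝ) (hηs : ηs = μ - Real.sqrt (v / (2 * ρ))) :
    ηs ≤ 0 ∧
    Real.sqrt (1 + 2 * ρ) * Real.sqrt (∫ z, (max (ℓ z - ηs) 0) ^ 2 ∂P) + ηs =
      μ + Real.sqrt (2 * ρ * v) := by
  have hvar : Var[ℓ; P] = v := by rw [variance_eq_integral hL2.aemeasurable, ← hμ, hv]
  have hηs_nonpos : ηs ≤ 0 := by
    linarith [le_sqrt_div_of_le_div_sq hρ hρv]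
  refine ⟨hηs_nonpos, ?_⟩
  have hpos_part : ∀ z, max (ℓ z - ηs) 0 = ℓ z - ηs := fun z ↦
    max_eq_left (by linarith [hnonneg z])
  have hsecond : ∫ z, (ℓ z - ηs) ^ 2 ∂P = v + √(v / (2 * ρ)) ^ 2 := by
    rw [integral_sub_const_sq_eq_variance_add hL2, hvar, ← hμ, hηs, sub_sub_cancel]
  simp_rw [hpos_part]
  rw [hsecond, sqrt_one_add_mul_sqrt_add_sq hρ (hvar ▸ variance_nonneg ℓ P), hηs]
  ring

/-- If `ρ ≤ v/(2μ²)`, then `η* = μ - √(v/(2ρ)) ≤ 0` and the χ²-DRO dual objective at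
`η*` equals `μ + √(2ρv)`. -/
theorem chisq_dual_at_optimal_eta {Z : Type*} [MeasurableSpace Z]
    (P : Measure Z) [IsProbabilityMeasure P]
    (ℓ : Z → ℝ) (hmeas : Measurable ℓ) (hnonneg : ∀ z, 0 ≤ ℓ z)
    (hL2 : MemLp ℓ 2 P)
    (μ v : ℝ) (hμ : μ = ∫ z, ℓ z ∂P) (hv : v = ∫ z, (ℓ z - μ) ^ 2 ∂P)
    (ρ : ℝ) (hρ : 0 < ρ) (hρv : ρ ≤ v / (2 * μ ^ 2))
    (ηs : ℝ) (hηs : ηs = μ - Real.sqrt (v / (2 * ρ))) :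
    ηs ≤ 0 ∧
    Real.sqrt (1 + 2 * ρ) * Real.sqrt (∫ z, (max (ℓ z - ηs) 0) ^ 2 ∂P) + ηs =
      μ + Real.sqrt (2 * ρ * v) :=
  chisq_dual_at_optimal_eta_general P ℓ hnonneg hL2 μ v hμ hv ρ hρ hρv ηs hηs
end

section
/- Let ℓ be nonnegative with E_P[ℓ]² ≥ Var_P[ℓ]/(2ρ), i.e. ρ ≥ Var_P[ℓ]/(2 E_P[ℓ]²). Then for every η < 0, the χ²-DRO dual objective satisfies g(η) ≥ g(0), where g(η) = √(1+2ρ)·E_P[(ℓ-η)²]^{1/2} + η. Hence the minimizer of g over ℝ is nonnegative. -/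
open MeasureTheory Real ProbabilityTheory

lemma integral_sub_const_sq {Ω : Type*} [MeasurableSpace Ω] {P : Measure Ω}
    [IsProbabilityMeasure P] {X : Ω → ℝ} (hX : MemLp X 2 P) (c : ℝ) :
    ∫ ω, (X ω - c) ^ 2 ∂P = Var[X; P] + (P[X] - c) ^ 2 := by
  have hdef := variance_eq_sub (X := fun ω ↦ X ω - c) (hX.sub (memLp_const c))
  rw [variance_sub_const hX.1] at hdef
  rw [hdef, integral_sub (hX.integrable one_le_two) (integrable_const c)]
  simp

/-- With `A = √c·√(v + μ²) ≤ c μ`, squaring `A - η ≤ √c·√(v + (μ - η)²)` reduces it to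
`-2ηA ≤ -2ηcμ` and `η² ≤ cη²`. -/
lemma sqrt_mul_sqrt_add_sq_le_of_nonpos {c v μ η : ℝ} (hc : 1 ≤ c) (hv : 0 ≤ v) (hμ : 0 ≤ μ)
    (hvμ : v ≤ (c - 1) * μ ^ 2) (hη : η ≤ 0) :
    √c * √(v + μ ^ 2) ≤ √c * √(v + (μ - η) ^ 2) + η := by
  have hc0 : 0 ≤ c := by linarith
  set A := √c * √(v + μ ^ 2) with hA
  have hA_sq : A ^ 2 = c * (v + μ ^ 2) := by
    rw [hA, mul_pow, sq_sqrt hc0, sq_sqrt (by positivity)]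
  have hA_le : A ≤ c * μ := by
    refine abs_le_of_sq_le_sq' ?_ (by positivity) |>.2
    rw [hA_sq]
    nlinarith [mul_le_mul_of_nonneg_left hvμ hc0]
  have hsq : (A - η) ^ 2 ≤ c * (v + (μ - η) ^ 2) := by
    nlinarith [mul_le_mul_of_nonneg_left hA_le (neg_nonneg.2 hη),
      mul_le_mul_of_nonneg_right hc (sq_nonneg η)]
  rw [← sqrt_mul hc0]
  linarith [le_sqrt_of_sq_le hsq]

theorem chisq_dual_nonneg_minimizer_general {Z : Type*} [MeasurableSpace Z]
    (P : Measure Z) [IsProbabilityMeasure P]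
    (ℓ : Z → ℝ) (hnonneg : ∀ z, 0 ≤ ℓ z)
    (hL2 : MemLp ℓ 2 P)
    (μ v : ℝ) (hμ : μ = ∫ z, ℓ z ∂P) (hv : v = ∫ z, (ℓ z - μ) ^ 2 ∂P)
    (ρ : ℝ) (hρ : 0 < ρ) (hρv : v / (2 * ρ) ≤ μ ^ 2) :
    ∀ η : ℝ, η < 0 →
      Real.sqrt (1 + 2 * ρ) * Real.sqrt (∫ z, (ℓ z - 0) ^ 2 ∂P) + 0 ≤
        Real.sqrt (1 + 2 * ρ) * Real.sqrt (∫ z, (ℓ z - η) ^ 2 ∂P) + η := by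
  intro η hη
  have hvar : Var[ℓ; P] = v := by
    rw [hv, hμ, variance_eq_integral hL2.1.aemeasurable]
  rw [integral_sub_const_sq hL2, integral_sub_const_sq hL2, hvar, ← hμ, sub_zero, add_zero]
  refine sqrt_mul_sqrt_add_sq_le_of_nonpos (by linarith) ?_ ?_ ?_ hη.le
  · exact hvar ▸ variance_nonneg ℓ P
  · exact hμ ▸ integral_nonneg hnonneg
  · rw [div_le_iff₀ (by positivity)] at hρv
    linarith

/-- If `ρ ≥ Var_P[ℓ]/(2 E_P[ℓ]²)`, then for every `η < 0` the χ²-DRO dual objective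
satisfies `g(η) ≥ g(0)`, where `g(η) = √(1+2ρ)·E_P[(ℓ-η)²]^{1/2} + η`. -/
theorem chisq_dual_nonneg_minimizer {Z : Type*} [MeasurableSpace Z]
    (P : Measure Z) [IsProbabilityMeasure P]
    (ℓ : Z → ℝ) (hmeas : Measurable ℓ) (hnonneg : ∀ z, 0 ≤ ℓ z)
    (hL2 : MemLp ℓ 2 P)
    (μ v : ℝ) (hμ : μ = ∫ z, ℓ z ∂P) (hv : v = ∫ z, (ℓ z - μ) ^ 2 ∂P)
    (ρ : ℝ) (hρ : 0 < ρ) (hρv : v / (2 * ρ) ≤ μ ^ 2) :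
    ∀ η : ℝ, η < 0 →
      Real.sqrt (1 + 2 * ρ) * Real.sqrt (∫ z, (ℓ z - 0) ^ 2 ∂P) + 0 ≤
        Real.sqrt (1 + 2 * ρ) * Real.sqrt (∫ z, (ℓ z - η) ^ 2 ∂P) + η :=
  chisq_dual_nonneg_minimizer_general P ℓ hnonneg hL2 μ v hμ hv ρ hρ hρv
end

section
/- Consider the two-point loss distribution where ℓ = 0 with probability 1-ε and ℓ = M with probability ε, with M > 0, ε ∈ (0,1), and ρ > 0 satisfying 1 + 2ρ ≤ 1/ε. Then the χ²-DRO risk inf_η { √(1+2ρ)·E[(ℓ-η)_+²]^{1/2} + η } = Mε + M√(2ρ ε(1-ε)), attained at η = εM - M√(ε(1-ε)/(2ρ)). -/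
/-!
For a law supported on `{0, M}` the dual objective is an explicit function of `η`. When `η ≤ 0`
both atoms lie above `η`, the second moment is `(εM - η)² + ε(1-ε)M²`, and Cauchy–Schwarz with
the vector `(1, √(2ρ))` bounds the objective below by `εM + M√(2ρε(1-ε))`; equality holds
exactly when `(εM - η, M√(ε(1-ε)))` is parallel to `(1, √(2ρ))`, i.e. at the stated `η`, which is
`≤ 0` because `(1+2ρ)ε ≤ 1`. When `η ≥ 0` the objective is `√((1+2ρ)ε)·(M-η)₊ + η`, and the same
condition `(1+2ρ)ε ≤ 1` makes it nondecreasing, so it never drops below its value at `η = 0`.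
-/

open MeasureTheory Real

section TwoPoint

variable {Z α E : Type*} [MeasurableSpace Z] [MeasurableSpace α] [MeasurableSingletonClass α]
  {P : Measure Z} {ℓ : Z → α} {a b : α}

lemma ae_eq_or_eq_of_measure_add_eq_one [IsProbabilityMeasure P] (hℓ : Measurable ℓ)
    (hab : a ≠ b) (h : P {z | ℓ z = a} + P {z | ℓ z = b} = 1) :
    ∀ᵐ z ∂P, ℓ z = a ∨ ℓ z = b := by
  have hdisj : Disjoint {z | ℓ z = a} {z | ℓ z = b} :=
    Set.disjoint_left.mpr fun z ha hb => hab (ha.symm.trans hb)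
  have hB : MeasurableSet {z | ℓ z = b} := hℓ (measurableSet_singleton b)
  have hunion : MeasurableSet ({z | ℓ z = a} ∪ {z | ℓ z = b}) :=
    (hℓ (measurableSet_singleton a)).union hB
  rw [ae_iff]
  exact (prob_compl_eq_zero_iff hunion).mpr (by rwa [measure_union hdisj hB])

lemma integral_comp_of_ae_eq_or_eq [NormedAddCommGroup E] [NormedSpace ℝ E] [CompleteSpace E]
    [IsFiniteMeasure P] (hℓ : Measurable ℓ) (hab : a ≠ b) (hae : ∀ᵐ z ∂P, ℓ z = a ∨ ℓ z = b)
    (f : α → E) :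
    ∫ z, f (ℓ z) ∂P = P.real {z | ℓ z = a} • f a + P.real {z | ℓ z = b} • f b := by
  have hA : MeasurableSet {z | ℓ z = a} := hℓ (measurableSet_singleton a)
  have hB : MeasurableSet {z | ℓ z = b} := hℓ (measurableSet_singleton b)
  have hcongr : (fun z => f (ℓ z)) =ᵐ[P]
      fun z => {z | ℓ z = a}.indicator (fun _ => f a) z +
        {z | ℓ z = b}.indicator (fun _ => f b) z := by
    filter_upwards [hae] with z hz
    rcases hz with hz | hz
    · simp [Set.indicator, hz, hab]
    · simp [Set.indicator, hz, hab.symm]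
  rw [integral_congr_ae hcongr, integral_add ((integrable_const _).indicator hA)
    ((integrable_const _).indicator hB), integral_indicator_const _ hA,
    integral_indicator_const _ hB]

end TwoPoint

lemma mul_add_mul_le_sqrt_mul_sqrt (a b x y : ℝ) :
    a * x + b * y ≤ √(a ^ 2 + b ^ 2) * √(x ^ 2 + y ^ 2) := by
  rw [← sqrt_mul (by positivity)]
  exact (le_abs_self _).trans (abs_le_sqrt (by nlinarith [sq_nonneg (a * y - b * x)]))

noncomputable def twoPointDualObjective (M ε ρ η : ℝ) : ℝ :=
  √(1 + 2 * ρ) * √((1 - ε) * max (0 - η) 0 ^ 2 + ε * max (M - η) 0 ^ 2) + η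

section TwoPointDualObjective

variable {M ε ρ η : ℝ}

lemma twoPointDualObjective_of_nonpos (hM : 0 ≤ M) (hη : η ≤ 0) :
    twoPointDualObjective M ε ρ η =
      √(1 + 2 * ρ) * √((ε * M - η) ^ 2 + ε * (1 - ε) * M ^ 2) + η := by
  rw [twoPointDualObjective, max_eq_left (by linarith), max_eq_left (by linarith)]
  ring_nf

lemma twoPointDualObjective_of_nonneg (hε : 0 ≤ ε) (hη : 0 ≤ η) :
    twoPointDualObjective M ε ρ η = √(1 + 2 * ρ) * √ε * max (M - η) 0 + η := by
  have hsqrt : √(ε * max (M - η) 0 ^ 2) = √ε * max (M - η) 0 := by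
    rw [sqrt_mul hε, sqrt_sq (le_max_right _ _)]
  rw [twoPointDualObjective, max_eq_right (by linarith), mul_assoc, ← hsqrt]
  ring_nf

lemma le_twoPointDualObjective_of_nonpos (hM : 0 ≤ M) (hε : 0 ≤ ε) (hε1 : ε ≤ 1) (hρ : 0 ≤ ρ)
    (hη : η ≤ 0) :
    M * ε + M * √(2 * ρ * ε * (1 - ε)) ≤ twoPointDualObjective M ε ρ η := by
  have hvar : 0 ≤ ε * (1 - ε) := by nlinarith
  calc M * ε + M * √(2 * ρ * ε * (1 - ε))
      = 1 * (ε * M - η) + √(2 * ρ) * (M * √(ε * (1 - ε))) + η := by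
        rw [mul_assoc (2 * ρ), sqrt_mul (by positivity)]; ring
    _ ≤ √(1 ^ 2 + √(2 * ρ) ^ 2) * √((ε * M - η) ^ 2 + (M * √(ε * (1 - ε))) ^ 2) + η := by
        gcongr; exact mul_add_mul_le_sqrt_mul_sqrt _ _ _ _
    _ = twoPointDualObjective M ε ρ η := by
        rw [twoPointDualObjective_of_nonpos hM hη, sq_sqrt (by positivity), mul_pow,
          sq_sqrt hvar]
        ring_nf

lemma twoPointDualObjective_zero_le (hε : 0 ≤ ε) (hρε : (1 + 2 * ρ) * ε ≤ 1) (hη : 0 ≤ η) :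
    twoPointDualObjective M ε ρ 0 ≤ twoPointDualObjective M ε ρ η := by
  have hc : √(1 + 2 * ρ) * √ε ≤ 1 := by
    rw [← sqrt_mul' _ hε]
    exact sqrt_le_one.mpr hρε
  have hshift : max M 0 ≤ max (M - η) 0 + η :=
    max_le (by linarith [le_max_left (M - η) 0]) (by linarith [le_max_right (M - η) 0])
  rw [twoPointDualObjective_of_nonneg hε hη, twoPointDualObjective_of_nonneg hε le_rfl, sub_zero]
  nlinarith [mul_le_mul_of_nonneg_left hshift (by positivity : 0 ≤ √(1 + 2 * ρ) * √ε),
    mul_nonneg (sub_nonneg.2 hc) hη]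

lemma le_twoPointDualObjective (hM : 0 ≤ M) (hε : 0 ≤ ε) (hε1 : ε ≤ 1) (hρ : 0 ≤ ρ)
    (hρε : (1 + 2 * ρ) * ε ≤ 1) (η : ℝ) :
    M * ε + M * √(2 * ρ * ε * (1 - ε)) ≤ twoPointDualObjective M ε ρ η := by
  rcases le_total η 0 with hη | hη
  · exact le_twoPointDualObjective_of_nonpos hM hε hε1 hρ hη
  · exact (le_twoPointDualObjective_of_nonpos hM hε hε1 hρ le_rfl).trans
      (twoPointDualObjective_zero_le hε hρε hη)

lemma twoPointDualObjective_optimal (hM : 0 ≤ M) (hε : 0 ≤ ε) (hε1 : ε ≤ 1) (hρ : 0 < ρ)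
    (hρε : (1 + 2 * ρ) * ε ≤ 1) :
    twoPointDualObjective M ε ρ (ε * M - M * √(ε * (1 - ε) / (2 * ρ))) =
      M * ε + M * √(2 * ρ * ε * (1 - ε)) := by
  set d := √(ε * (1 - ε) / (2 * ρ)) with hd
  have hd0 : 0 ≤ d := sqrt_nonneg _
  have hvar : ε * (1 - ε) = 2 * ρ * d ^ 2 := by
    rw [hd, sq_sqrt (by positivity)]; field_simp
  have hεd : ε ≤ d := by
    refine le_of_pow_le_pow_left₀ two_ne_zero hd0 ?_
    nlinarith
  rw [twoPointDualObjective_of_nonpos hM (by nlinarith), hvar,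
    show (ε * M - (ε * M - M * d)) ^ 2 + 2 * ρ * d ^ 2 * M ^ 2 = (1 + 2 * ρ) * (M * d) ^ 2 by ring,
    sqrt_mul (by positivity), sqrt_sq (by positivity), ← mul_assoc, mul_self_sqrt (by positivity),
    show 2 * ρ * ε * (1 - ε) = (2 * ρ * d) ^ 2 by linear_combination 2 * ρ * hvar,
    sqrt_sq (by positivity)]
  ring

end TwoPointDualObjective

/-- For the two-point loss (`ℓ = 0` w.p. `1-ε`, `ℓ = M` w.p. `ε`) with `M > 0`,
`ε ∈ (0,1)` and `1 + 2ρ ≤ 1/ε`, the χ²-DRO risk equals `Mε + M√(2ρε(1-ε))`,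
attained at `η = εM - M√(ε(1-ε)/(2ρ))`. -/
theorem chisq_dro_two_point {Z : Type*} [MeasurableSpace Z]
    (P : Measure Z) [IsProbabilityMeasure P]
    (ℓ : Z → ℝ) (hmeas : Measurable ℓ)
    (M ε : ℝ) (hM : 0 < M) (hε : 0 < ε) (hε1 : ε < 1)
    (h0 : P {z | ℓ z = 0} = ENNReal.ofReal (1 - ε))
    (hMset : P {z | ℓ z = M} = ENNReal.ofReal ε)
    (ρ : ℝ) (hρ : 0 < ρ) (hρε : 1 + 2 * ρ ≤ 1 / ε) :
    (⨅ η : ℝ, Real.sqrt (1 + 2 * ρ) * Real.sqrt (∫ z, (max (ℓ z - η) 0) ^ 2 ∂P) + η) =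
      M * ε + M * Real.sqrt (2 * ρ * ε * (1 - ε)) ∧
    Real.sqrt (1 + 2 * ρ) *
        Real.sqrt (∫ z,
          (max (ℓ z - (ε * M - M * Real.sqrt (ε * (1 - ε) / (2 * ρ)))) 0) ^ 2 ∂P) +
        (ε * M - M * Real.sqrt (ε * (1 - ε) / (2 * ρ))) =
      M * ε + M * Real.sqrt (2 * ρ * ε * (1 - ε)) := by
  have hρε' : (1 + 2 * ρ) * ε ≤ 1 := (le_div_iff₀ hε).mp hρε
  have hae : ∀ᵐ z ∂P, ℓ z = 0 ∨ ℓ z = M :=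
    ae_eq_or_eq_of_measure_add_eq_one hmeas hM.ne <| by
      rw [h0, hMset, ← ENNReal.ofReal_add (by linarith) hε.le, sub_add_cancel, ENNReal.ofReal_one]
  have hobj (η : ℝ) : √(1 + 2 * ρ) * √(∫ z, (max (ℓ z - η) 0) ^ 2 ∂P) + η =
      twoPointDualObjective M ε ρ η := by
    rw [integral_comp_of_ae_eq_or_eq hmeas hM.ne hae (fun t => max (t - η) 0 ^ 2),
      measureReal_def, measureReal_def, h0, hMset, ENNReal.toReal_ofReal (by linarith),
      ENNReal.toReal_ofReal hε.le]
    rfl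
  have hopt := twoPointDualObjective_optimal hM.le hε.le hε1.le hρ hρε'
  have hleast : IsLeast (Set.range (twoPointDualObjective M ε ρ))
      (M * ε + M * √(2 * ρ * ε * (1 - ε))) :=
    ⟨⟨_, hopt⟩, Set.forall_mem_range.2 (le_twoPointDualObjective hM.le hε.le hε1.le hρ.le hρε')⟩
  simp only [hobj]
  exact ⟨hleast.isGLB.ciInf_eq, hopt⟩
end

section
/- Let ℓ be a continuous nonnegative loss, P_train a continuous (atomless) distribution, and ε ∈ (0,1). Define P* by the density P*(z) = P_train(z)/(1-ε) if ℓ(z) ≤ ℓ*, and 0 otherwise, where ℓ* satisfies P_train(ℓ(Z) > ℓ*) = ε. Then P* is a probability distribution, and for every threshold ℓ₀, P*(ℓ(Z) ≤ ℓ₀) = min{1, P_train(ℓ(Z) ≤ ℓ₀)/(1-ε)}; moreover this CDF pointwise dominates (is ≥) the CDF of ℓ under any P' admitting a decomposition P_train = (1-ε)P' + ε P̃'. -/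
open MeasureTheory Real

open ProbabilityTheory
open scoped ENNReal

/-! Since `P_train(ℓ ≤ ℓ*) = 1 - ε`, the truncated measure `P*` is `P_train` conditioned on
the sublevel set `{ℓ ≤ ℓ*}`. Conditioning on a set `s` assigns `min 1 (μ t / μ s)` to every
`t` comparable with `s` under inclusion, and sublevel sets of `ℓ` are totally ordered. On the
other hand `(1 - ε) P' ≤ P_train` forces `P' t ≤ min 1 (P_train t / (1 - ε))` for every `t`. -/

section

variable {Ω : Type*} [MeasurableSpace Ω]

lemma cond_apply_of_subset_or_subset {μ : Measure Ω} {s t : Set Ω} (hs : MeasurableSet s)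
    (hs₀ : μ s ≠ 0) (hs_top : μ s ≠ ∞) (hst : s ⊆ t ∨ t ⊆ s) :
    μ[t | s] = min 1 (μ t / μ s) := by
  rw [cond_apply hs]
  rcases hst with hst | hts
  · rw [Set.inter_eq_left.2 hst, ENNReal.inv_mul_cancel hs₀ hs_top, min_eq_left]
    exact (ENNReal.le_div_iff_mul_le (.inl hs₀) (.inl hs_top)).2
      (by simpa using measure_mono hst)
  · rw [Set.inter_eq_right.2 hts, min_eq_right, ENNReal.div_eq_inv_mul]
    exact ENNReal.div_le_of_le_mul (by simpa using measure_mono hts)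

lemma cond_setOf_le_apply (μ : Measure Ω) [IsFiniteMeasure μ] {f : Ω → ℝ}
    (hf : Measurable f) {a : ℝ} (ha : μ {x | f x ≤ a} ≠ 0) (b : ℝ) :
    μ[{x | f x ≤ b} | {x | f x ≤ a}] = min 1 (μ {x | f x ≤ b} / μ {x | f x ≤ a}) :=
  cond_apply_of_subset_or_subset (measurableSet_le hf measurable_const) ha (measure_ne_top _ _)
    ((le_total a b).imp (fun h _ hx => le_trans hx h) (fun h _ hx => le_trans hx h))

lemma apply_le_min_one_div_of_smul_le {ν μ : Measure Ω} [IsProbabilityMeasure ν]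
    {c : ℝ≥0∞} (hc₀ : c ≠ 0) (hc_top : c ≠ ∞) (h : c • ν ≤ μ) (t : Set Ω) :
    ν t ≤ min 1 (μ t / c) :=
  le_min prob_le_one <| (ENNReal.le_div_iff_mul_le (.inl hc₀) (.inl hc_top)).2 <| by
    rw [mul_comm]
    exact h t

end

theorem truncated_distribution_dominates_general {Z : Type*} [MeasurableSpace Z]
    [TopologicalSpace Z] [OpensMeasurableSpace Z]
    (Ptrain : Measure Z) [IsProbabilityMeasure Ptrain]
    (ℓ : Z → ℝ) (hcont : Continuous ℓ)
    (ε : ℝ) (hε : 0 < ε) (hε1 : ε < 1)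
    (ls : ℝ) (hls : Ptrain {z | ls < ℓ z} = ENNReal.ofReal ε)
    (Pstar : Measure Z)
    (hPstar : Pstar = (ENNReal.ofReal (1 - ε))⁻¹ • Ptrain.restrict {z | ℓ z ≤ ls}) :
    IsProbabilityMeasure Pstar ∧
    (∀ l₀ : ℝ, (Pstar {z | ℓ z ≤ l₀}).toReal =
      min 1 ((Ptrain {z | ℓ z ≤ l₀}).toReal / (1 - ε))) ∧
    (∀ (P' Pt' : Measure Z), IsProbabilityMeasure P' → IsProbabilityMeasure Pt' →
      Ptrain = ENNReal.ofReal (1 - ε) • P' + ENNReal.ofReal ε • Pt' →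
      ∀ l₀ : ℝ, P' {z | ℓ z ≤ l₀} ≤ Pstar {z | ℓ z ≤ l₀}) := by
  have hℓ := hcont.measurable
  have hmass : Ptrain {z | ℓ z ≤ ls} = ENNReal.ofReal (1 - ε) := by
    have hcompl : {z | ℓ z ≤ ls} = {z | ls < ℓ z}ᶜ := by ext; simp
    rw [hcompl, prob_compl_eq_one_sub (measurableSet_lt measurable_const hℓ), hls,
      ENNReal.ofReal_sub 1 hε.le, ENNReal.ofReal_one]
  have hmass₀ : ENNReal.ofReal (1 - ε) ≠ 0 := by simpa using hε1
  have hcond : Pstar = Ptrain[|{z | ℓ z ≤ ls}] := by rw [hPstar, ← hmass]; rfl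
  have hcdf (l₀ : ℝ) :
      Pstar {z | ℓ z ≤ l₀} = min 1 (Ptrain {z | ℓ z ≤ l₀} / ENNReal.ofReal (1 - ε)) := by
    rw [hcond, cond_setOf_le_apply Ptrain hℓ (hmass ▸ hmass₀), hmass]
  refine ⟨hcond ▸ cond_isProbabilityMeasure (hmass ▸ hmass₀), fun l₀ => ?_,
    fun P' Pt' _ _ hdec l₀ => ?_⟩
  · rw [hcdf, ENNReal.toReal_min ENNReal.one_ne_top
        (ENNReal.div_ne_top (measure_ne_top _ _) hmass₀),
      ENNReal.toReal_div, ENNReal.toReal_ofReal (by linarith), ENNReal.toReal_one]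
  · rw [hcdf]
    refine apply_le_min_one_div_of_smul_le hmass₀ ENNReal.ofReal_ne_top ?_ _
    rw [hdec]
    exact Measure.le_add_right le_rfl

/-- For a continuous nonnegative loss and atomless `P_train`, the truncated distribution
`P* = (1-ε)⁻¹ P_train restricted to {ℓ ≤ ℓ*}` (with `P_train(ℓ > ℓ*) = ε`) is a
probability measure whose CDF of the loss equals `min{1, P_train(ℓ ≤ ℓ₀)/(1-ε)}`
and pointwise dominates the loss-CDF of any `P'` admitting a decomposition
`P_train = (1-ε)P' + εP̃'`. -/
theorem truncated_distribution_dominates {Z : Type*} [MeasurableSpace Z]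
    [TopologicalSpace Z] [OpensMeasurableSpace Z]
    (Ptrain : Measure Z) [IsProbabilityMeasure Ptrain]
    (ℓ : Z → ℝ) (hcont : Continuous ℓ) (hnonneg : ∀ z, 0 ≤ ℓ z)
    (ε : ℝ) (hε : 0 < ε) (hε1 : ε < 1)
    (ls : ℝ) (hls : Ptrain {z | ls < ℓ z} = ENNReal.ofReal ε)
    (hatomless : Ptrain {z | ℓ z = ls} = 0)
    (Pstar : Measure Z)
    (hPstar : Pstar = (ENNReal.ofReal (1 - ε))⁻¹ • Ptrain.restrict {z | ℓ z ≤ ls}) :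
    IsProbabilityMeasure Pstar ∧
    (∀ l₀ : ℝ, (Pstar {z | ℓ z ≤ l₀}).toReal =
      min 1 ((Ptrain {z | ℓ z ≤ l₀}).toReal / (1 - ε))) ∧
    (∀ (P' Pt' : Measure Z), IsProbabilityMeasure P' → IsProbabilityMeasure Pt' →
      Ptrain = ENNReal.ofReal (1 - ε) • P' + ENNReal.ofReal ε • Pt' →
      ∀ l₀ : ℝ, P' {z | ℓ z ≤ l₀} ≤ Pstar {z | ℓ z ≤ l₀}) :=
  truncated_distribution_dominates_general Ptrain ℓ hcont ε hε hε1 ls hls Pstar hPstar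
end
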